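/- Stability for the QNL operator: if ν := φ''_F - 4|φ''_{2F}| > 0, then h v · L^{qnl,h} v ≥ ν ||Dv||²_{l²} for all 2N-periodic v, and consequently if L^{qnl,h} v = b with Σ b_j = 0 and v mean-zero, then ||Dv||_{l²} ≤ (1/(2ν))||b||_{l²}. -/

import Mathlib

/-- The QNL operator `L^{qnl,h}` for indices `0 ≤ j ≤ N` (`a = φ''_F`, `b = φ''_{2F}`). -/
noncomputable def LqnlP (a b h : ℝ) (K : ℤ) (u : ℤ → ℝ) (j : ℤ) : ℝ :=
  a * (-u (j + 1) + 2 * u j - u (j - 1)) / h ^ 2 +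
  (if j ≤ K - 1 then
      4 * b * (-u (j + 2) + 2 * u j - u (j - 2)) / (4 * h ^ 2)
    else if j = K then
      4 * b * (-u (j + 2) + 2 * u j - u (j - 2)) / (4 * h ^ 2)
        - b * (-u (j + 2) + 2 * u (j + 1) - u j) / h ^ 2
    else if j = K + 1 then
      4 * b * (-u (j + 1) + 2 * u j - u (j - 1)) / h ^ 2
        + b * (-u j + 2 * u (j - 1) - u (j - 2)) / h ^ 2
    else
      4 * b * (-u (j + 1) + 2 * u j - u (j - 1)) / h ^ 2)

/-- The QNL operator extended to all indices by the symmetry `S L S = L`,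
where `(Su)_j = -u_{-j}`. -/
noncomputable def Lqnl (a b h : ℝ) (K : ℤ) (u : ℤ → ℝ) (j : ℤ) : ℝ :=
  if 0 ≤ j then LqnlP a b h K u j
  else -LqnlP a b h K (fun i => -u (-i)) (-j)

/-!
Summation by parts gives, row by row, `h² v_j (L v)_j = e_j + F_{j+1} - F_j`, where the energy
density `e_j = (a + 4b)(Dv_j)² - b (D²v_j)²·[|j| ≤ K]` comes from
`(v_{j+1} - v_{j-1})² = 2(Dv_{j+1})² + 2(Dv_j)² - (D²v_j)²` in the atomistic region. The flux
takes its continuum form at both ends of the period window, so it telescopes away, and `b < 0`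
gives `h v·Lv ≥ (a + 4b)‖Dv‖² = ν‖Dv‖²`.

If `L v = f`, then `ν‖Dv‖² ≤ h v·f ≤ ‖v‖‖f‖ ≤ ½‖Dv‖‖f‖` by Cauchy–Schwarz and Poincaré. The
Poincaré inequality comes from averaging over all shifts `m` of the window: for mean-zero `v`,
`∑_m ∑_j (v_{j+m} - v_j)² = 4N ∑_j v_j²`, each inner sum is at most `m² ∑_j (Dv_j)²`, and
`∑_{m=-N+1}^{N} m² ≤ N³`.
-/

open Finset Function

theorem Int.sum_Icc_sub {G : Type*} [AddCommGroup G] (f : ℤ → G) {a b : ℤ}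
    (hab : a ≤ b + 1) :
    ∑ j ∈ Icc a b, (f (j + 1) - f j) = f (b + 1) - f a := by
  obtain ⟨n, hn⟩ := Int.eq_ofNat_of_zero_le (by omega : 0 ≤ b + 1 - a)
  have h := sum_range_sub (fun k : ℕ => f (a + k)) n
  simp only [Int.Icc_eq_finset_map, sum_map, hn, Int.toNat_natCast, Embedding.trans_apply,
    Nat.castEmbedding_apply, addLeftEmbedding_apply]
  simpa [add_assoc, show a + n = b + 1 by omega] using h

theorem Int.sum_Icc_sq_le {N : ℤ} (hN : 0 ≤ N) :
    ∑ m ∈ Icc (-N + 1) N, (m : ℝ) ^ 2 ≤ (N : ℝ) ^ 3 := by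
  induction N, hN using Int.leInduction with
  | base => simp
  | succ N hN ih =>
    have hIcc :
        Icc (-(N + 1) + 1) (N + 1) = insert (-N) (insert (N + 1) (Icc (-N + 1) N)) := by
      ext; simp; omega
    rw [hIcc, sum_insert (by simp; omega), sum_insert (by simp)]
    have hN' : (0 : ℝ) ≤ N := by exact_mod_cast hN
    push_cast
    nlinarith

theorem mul_sum_mul_le_sqrt_mul_sqrt {ι : Type*} (s : Finset ι) (f g : ι → ℝ) {h : ℝ}
    (hh : 0 ≤ h) :
    h * ∑ i ∈ s, f i * g i ≤ √(h * ∑ i ∈ s, f i ^ 2) * √(h * ∑ i ∈ s, g i ^ 2) := by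
  rw [Real.sqrt_mul hh, Real.sqrt_mul hh, mul_mul_mul_comm, Real.mul_self_sqrt hh]
  exact mul_le_mul_of_nonneg_left (Real.sum_mul_le_sqrt_mul_sqrt s f g) hh

theorem le_one_div_mul_of_mul_sq_le {ν X Y Z : ℝ} (hν : 0 < ν) (hZ : 0 ≤ Z)
    (hXYZ : ν * X ^ 2 ≤ Y * Z) (hYX : Y ≤ X / 2) : X ≤ 1 / (2 * ν) * Z := by
  rw [one_div_mul_eq_div, le_div_iff₀ (by positivity)]
  nlinarith [mul_le_mul_of_nonneg_right hYX hZ]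

namespace Function.Periodic

section

variable {M : Type*} [AddCancelCommMonoid M] {g : ℤ → M}

theorem sum_range_add {n : ℕ} (hg : Periodic g n) (c : ℤ) :
    ∑ k ∈ range n, g (c + k) = ∑ k ∈ range n, g k := by
  have hstep : Periodic (fun c : ℤ => ∑ k ∈ range n, g (c + k)) 1 := by
    intro c
    have h := (sum_range_succ' (fun k : ℕ => g (c + k)) n).symm.trans
      (sum_range_succ (fun k : ℕ => g (c + k)) n)
    rw [Nat.cast_zero, add_zero, hg c] at h
    simpa only [Nat.cast_succ, add_assoc, add_comm (1 : ℤ)] using add_right_cancel h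
  simpa using hstep.int_mul_eq c

theorem sum_Icc_add {a b : ℤ} (hg : Periodic g (b + 1 - a)) (t : ℤ) :
    ∑ j ∈ Icc a b, g (j + t) = ∑ j ∈ Icc a b, g j := by
  rcases lt_or_ge b a with hba | hab
  · simp [Icc_eq_empty_of_lt hba]
  obtain ⟨n, hn⟩ := Int.eq_ofNat_of_zero_le (by omega : 0 ≤ b + 1 - a)
  rw [hn] at hg
  simp only [Int.Icc_eq_finset_map, sum_map, hn, Int.toNat_natCast, Embedding.trans_apply,
    Nat.castEmbedding_apply, addLeftEmbedding_apply, add_right_comm a _ t,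
    hg.sum_range_add]

end

variable {v : ℤ → ℝ}

theorem sum_sq_sub_shift_le {a b : ℤ} (hv : Periodic v (b + 1 - a)) (m : ℤ) :
    ∑ j ∈ Icc a b, (v (j + m) - v j) ^ 2
      ≤ (m : ℝ) ^ 2 * ∑ j ∈ Icc a b, (v j - v (j - 1)) ^ 2 := by
  have hD : Periodic (fun j => (v j - v (j - 1)) ^ 2) (b + 1 - a) := fun j => by
    simp only [hv j, show j + (b + 1 - a) - 1 = j - 1 + (b + 1 - a) by ring, hv (j - 1)]
  have hnat (n : ℕ) : ∑ j ∈ Icc a b, (v (j + n) - v j) ^ 2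
      ≤ (n : ℝ) ^ 2 * ∑ j ∈ Icc a b, (v j - v (j - 1)) ^ 2 := by
    have htel (j : ℤ) :
        v (j + n) - v j = ∑ t ∈ range n, (v (j + (t + 1 : ℕ)) - v (j + (t + 1 : ℕ) - 1)) := by
      simpa [add_assoc, add_sub_assoc] using (sum_range_sub (fun t : ℕ => v (j + t)) n).symm
    calc ∑ j ∈ Icc a b, (v (j + n) - v j) ^ 2
        ≤ ∑ j ∈ Icc a b, (n : ℝ) *
            ∑ t ∈ range n, (v (j + (t + 1 : ℕ)) - v (j + (t + 1 : ℕ) - 1)) ^ 2 := by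
          gcongr with j
          rw [htel]
          simpa using sq_sum_le_card_mul_sum_sq (s := range n)
            (f := fun t : ℕ => v (j + (t + 1 : ℕ)) - v (j + (t + 1 : ℕ) - 1))
      _ = (n : ℝ) * ∑ t ∈ range n, ∑ j ∈ Icc a b, (v j - v (j - 1)) ^ 2 := by
          rw [← mul_sum, sum_comm]
          congr 1
          exact sum_congr rfl fun t _ => hD.sum_Icc_add _
      _ = _ := by simp; ring
  have hneg (n : ℤ) :
      ∑ j ∈ Icc a b, (v (j + -n) - v j) ^ 2 = ∑ j ∈ Icc a b, (v (j + n) - v j) ^ 2 := by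
    have hG : Periodic (fun j => (v (j + n) - v j) ^ 2) (b + 1 - a) := fun j => by
      simp only [add_right_comm j, hv _]
    rw [← hG.sum_Icc_add (-n)]
    exact sum_congr rfl fun j _ => by simp only [neg_add_cancel_right]; ring
  obtain ⟨n, rfl | rfl⟩ := Int.eq_nat_or_neg m
  · exact_mod_cast hnat n
  · rw [hneg]; push_cast; simpa using hnat n

theorem sum_sum_sq_sub_shift {a b : ℤ} (hv : Periodic v (b + 1 - a)) :
    ∑ m ∈ Icc a b, ∑ j ∈ Icc a b, (v (j + m) - v j) ^ 2
      = 2 * #(Icc a b) * ∑ j ∈ Icc a b, v j ^ 2 - 2 * (∑ j ∈ Icc a b, v j) ^ 2 := by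
  have hsq : Periodic (fun j => v j ^ 2) (b + 1 - a) := fun j => by simp only [hv j]
  have hrow {f : ℤ → ℝ} (hf : Periodic f (b + 1 - a)) (j : ℤ) :
      ∑ m ∈ Icc a b, f (j + m) = ∑ m ∈ Icc a b, f m := by
    simpa only [add_comm j] using hf.sum_Icc_add j
  rw [sum_comm]
  simp only [sub_sq, sum_add_distrib, sum_sub_distrib, ← sum_mul, ← mul_sum, sum_const,
    nsmul_eq_mul, hrow hv, hrow hsq]
  ring

theorem sum_sq_le_of_sum_eq_zero {N : ℤ} (hN : 0 < N) (hv : Periodic v (2 * N))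
    (hmean : ∑ j ∈ Icc (-N + 1) N, v j = 0) :
    ∑ j ∈ Icc (-N + 1) N, v j ^ 2
      ≤ (N : ℝ) ^ 2 / 4 * ∑ j ∈ Icc (-N + 1) N, (v j - v (j - 1)) ^ 2 := by
  have hv' : Periodic v (N + 1 - (-N + 1)) := by rwa [show N + 1 - (-N + 1) = 2 * N by ring]
  have hcard : (#(Icc (-N + 1) N) : ℝ) = 2 * N := by
    rw [Int.card_Icc, show N + 1 - (-N + 1) = 2 * N by ring]
    exact_mod_cast Int.toNat_of_nonneg (by omega)
  have hD : 0 ≤ ∑ j ∈ Icc (-N + 1) N, (v j - v (j - 1)) ^ 2 :=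
    sum_nonneg fun _ _ => sq_nonneg _
  refine le_of_mul_le_mul_left ?_ (by positivity : (0 : ℝ) < 4 * N)
  calc 4 * N * ∑ j ∈ Icc (-N + 1) N, v j ^ 2
      = ∑ m ∈ Icc (-N + 1) N, ∑ j ∈ Icc (-N + 1) N, (v (j + m) - v j) ^ 2 := by
        rw [hv'.sum_sum_sq_sub_shift, hmean, hcard]; ring
    _ ≤ ∑ m ∈ Icc (-N + 1) N,
          (m : ℝ) ^ 2 * ∑ j ∈ Icc (-N + 1) N, (v j - v (j - 1)) ^ 2 :=
        sum_le_sum fun m _ => hv'.sum_sq_sub_shift_le m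
    _ ≤ N ^ 3 * ∑ j ∈ Icc (-N + 1) N, (v j - v (j - 1)) ^ 2 := by
        rw [← sum_mul]; exact mul_le_mul_of_nonneg_right (Int.sum_Icc_sq_le hN.le) hD
    _ = 4 * N * ((N : ℝ) ^ 2 / 4 * ∑ j ∈ Icc (-N + 1) N, (v j - v (j - 1)) ^ 2) := by ring

theorem sqrt_mul_sum_sq_le {N : ℤ} (hN : 0 < N) {h : ℝ} (hh : h = 1 / N)
    (hv : Periodic v (2 * N)) (hmean : ∑ j ∈ Icc (-N + 1) N, v j = 0) :
    √(h * ∑ j ∈ Icc (-N + 1) N, v j ^ 2)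
      ≤ √(h * ∑ j ∈ Icc (-N + 1) N, ((v j - v (j - 1)) / h) ^ 2) / 2 := by
  have hN' : (0 : ℝ) < N := by exact_mod_cast hN
  have hpoinc := hv.sum_sq_le_of_sum_eq_zero hN hmean
  calc √(h * ∑ j ∈ Icc (-N + 1) N, v j ^ 2)
      ≤ √((h * ∑ j ∈ Icc (-N + 1) N, ((v j - v (j - 1)) / h) ^ 2) / 4) := by
        refine Real.sqrt_le_sqrt ?_
        simp only [hh, div_pow, ← sum_div]
        field_simp
        nlinarith
    _ = √(h * ∑ j ∈ Icc (-N + 1) N, ((v j - v (j - 1)) / h) ^ 2) / 2 := by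
        rw [Real.sqrt_div' _ (by norm_num), show (4 : ℝ) = 2 ^ 2 by norm_num,
          Real.sqrt_sq (by norm_num)]

end Function.Periodic

noncomputable def qnlFlux (a b : ℝ) (K : ℤ) (v : ℤ → ℝ) (j : ℤ) : ℝ :=
  a * (v (j - 1) ^ 2 - v (j - 1) * v j) +
  b * (if j ≤ -K - 1 then 4 * v (j - 1) ^ 2 - 4 * v (j - 1) * v j
    else if j = -K then 3 * v (j - 1) ^ 2 - 2 * v (j - 1) * v j - v (j - 1) * v (j + 1)
    else if j ≤ K then v (j - 2) * v j + 3 * v (j - 1) ^ 2 - 4 * v (j - 1) * v j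
      - v (j - 1) * v (j + 1) + v j ^ 2
    else if j = K + 1 then v (j - 2) * v j + 4 * v (j - 1) ^ 2 - 6 * v (j - 1) * v j + v j ^ 2
    else 4 * v (j - 1) ^ 2 - 4 * v (j - 1) * v j)

noncomputable def qnlDensity (a b : ℝ) (K : ℤ) (v : ℤ → ℝ) (j : ℤ) : ℝ :=
  (a + 4 * b) * (v j - v (j - 1)) ^ 2 +
    if -K ≤ j ∧ j ≤ K then -b * (v (j + 1) - 2 * v j + v (j - 1)) ^ 2 else 0

theorem Lqnl_eq_div (a b h : ℝ) (K : ℤ) (u : ℤ → ℝ) (j : ℤ) :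
    Lqnl a b h K u j = Lqnl a b 1 K u j / h ^ 2 := by
  unfold Lqnl LqnlP
  split_ifs <;> ring

set_option maxHeartbeats 400000 in
theorem mul_Lqnl_one {K : ℤ} (hK : 1 ≤ K) (a b : ℝ) (v : ℤ → ℝ) (j : ℤ) :
    v j * Lqnl a b 1 K v j
      = qnlDensity a b K v j + (qnlFlux a b K v (j + 1) - qnlFlux a b K v j) := by
  unfold Lqnl LqnlP qnlDensity qnlFlux
  split_ifs <;> first | omega | ring_nf

theorem sum_mul_Lqnl {N K : ℤ} (hK : 1 ≤ K) (hKN : K + 2 ≤ N) (a b h : ℝ) {v : ℤ → ℝ}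
    (hv : Periodic v (2 * N)) :
    ∑ j ∈ Icc (-N + 1) N, v j * Lqnl a b h K v j
      = (∑ j ∈ Icc (-N + 1) N, qnlDensity a b K v j) / h ^ 2 := by
  have hflux : qnlFlux a b K v (N + 1) = qnlFlux a b K v (-N + 1) := by
    have e0 : v (N + 1 - 1) = v (-N + 1 - 1) := by rw [← hv (-N + 1 - 1)]; ring_nf
    have e1 : v (N + 1) = v (-N + 1) := by rw [← hv (-N + 1)]; ring_nf
    simp only [qnlFlux, if_neg (show ¬N + 1 ≤ -K - 1 by omega),
      if_neg (show ¬N + 1 = -K by omega), if_neg (show ¬N + 1 ≤ K by omega),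
      if_neg (show ¬N + 1 = K + 1 by omega),
      if_pos (show -N + 1 ≤ -K - 1 by omega), e0, e1]
  simp only [Lqnl_eq_div a b h, mul_div_assoc', mul_Lqnl_one hK, ← sum_div, sum_add_distrib,
    Int.sum_Icc_sub _ (show -N + 1 ≤ N + 1 by omega), hflux, sub_self, add_zero]

theorem Lqnl_coercive {N K : ℤ} (hK : 1 ≤ K) (hKN : K + 2 ≤ N) {a b h : ℝ} (hb : b ≤ 0)
    (hh : 0 ≤ h) {v : ℤ → ℝ} (hv : Periodic v (2 * N)) :
    (a + 4 * b) * (h * ∑ j ∈ Icc (-N + 1) N, ((v j - v (j - 1)) / h) ^ 2)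
      ≤ h * ∑ j ∈ Icc (-N + 1) N, v j * Lqnl a b h K v j := by
  have hdens : (a + 4 * b) * ∑ j ∈ Icc (-N + 1) N, (v j - v (j - 1)) ^ 2
      ≤ ∑ j ∈ Icc (-N + 1) N, qnlDensity a b K v j := by
    rw [mul_sum]
    refine sum_le_sum fun j _ => le_add_of_nonneg_right ?_
    split_ifs
    exacts [mul_nonneg (neg_nonneg.2 hb) (sq_nonneg _), le_rfl]
  have hscale (x : ℝ) : h * (x / h ^ 2) = x / h := by
    rcases eq_or_ne h 0 with rfl | hne
    · simp
    · field_simp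
  simp only [sum_mul_Lqnl hK hKN a b h hv, div_pow, ← sum_div, hscale, ← mul_div_assoc]
  exact div_le_div_of_nonneg_right hdens hh

theorem qnl_stability_general (N K : ℤ) (hK : 2 ≤ K) (hKN : K ≤ N - 2)
    (a b h : ℝ) (hb : b < 0) (hh : h = 1 / (N : ℝ))
    (ν : ℝ) (hν : ν = a - 4 * |b|) (hν0 : 0 < ν) :
    (∀ v : ℤ → ℝ, (∀ j : ℤ, v (j + 2 * N) = v j) →
      h * ∑ j ∈ Finset.Icc (-N + 1) N, v j * Lqnl a b h K v j ≥
        ν * (h * ∑ j ∈ Finset.Icc (-N + 1) N, ((v j - v (j - 1)) / h) ^ 2)) ∧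
    (∀ v rhs : ℤ → ℝ, (∀ j : ℤ, v (j + 2 * N) = v j) →
      (∀ j : ℤ, rhs (j + 2 * N) = rhs j) →
      (∀ j ∈ Finset.Icc (-N + 1) N, Lqnl a b h K v j = rhs j) →
      (∑ j ∈ Finset.Icc (-N + 1) N, rhs j = 0) →
      (∑ j ∈ Finset.Icc (-N + 1) N, v j = 0) →
      Real.sqrt (h * ∑ j ∈ Finset.Icc (-N + 1) N, ((v j - v (j - 1)) / h) ^ 2) ≤
        (1 / (2 * ν)) * Real.sqrt (h * ∑ j ∈ Finset.Icc (-N + 1) N, (rhs j) ^ 2)) := by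
  have hνab : ν = a + 4 * b := by rw [hν, abs_of_neg hb]; ring
  have hpos : 0 < h := by
    rw [hh, one_div_pos, Int.cast_pos]; omega
  have hcoer (v : ℤ → ℝ) (hv : Periodic v (2 * N)) :
      ν * (h * ∑ j ∈ Icc (-N + 1) N, ((v j - v (j - 1)) / h) ^ 2)
        ≤ h * ∑ j ∈ Icc (-N + 1) N, v j * Lqnl a b h K v j :=
    hνab ▸ Lqnl_coercive (by omega) (by omega) hb.le hpos.le hv
  refine ⟨hcoer, fun v rhs hv _ hL _ hmean => ?_⟩
  refine le_one_div_mul_of_mul_sq_le hν0 (Real.sqrt_nonneg _) ?_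
    (Periodic.sqrt_mul_sum_sq_le (by omega) hh hv hmean)
  rw [Real.sq_sqrt (by positivity)]
  calc ν * (h * ∑ j ∈ Icc (-N + 1) N, ((v j - v (j - 1)) / h) ^ 2)
      ≤ h * ∑ j ∈ Icc (-N + 1) N, v j * Lqnl a b h K v j := hcoer v hv
    _ = h * ∑ j ∈ Icc (-N + 1) N, v j * rhs j := by
        rw [sum_congr rfl fun j hj => by rw [hL j hj]]
    _ ≤ _ := mul_sum_mul_le_sqrt_mul_sqrt _ _ _ hpos.le

/-- Stability of the QNL operator: if `ν = φ''_F - 4|φ''_{2F}| > 0` then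
`h v·L^{qnl,h}v ≥ ν ‖Dv‖²_{l²}` for all 2N-periodic `v`, and consequently a
mean-zero solution of `L^{qnl,h}v = b` with mean-zero data satisfies
`‖Dv‖_{l²} ≤ ‖b‖_{l²}/(2ν)`. -/
theorem qnl_stability (N K : ℤ) (hN : 1 ≤ N) (hK : 2 ≤ K) (hKN : K ≤ N - 2)
    (a b h : ℝ) (ha : 0 < a) (hb : b < 0) (hh : h = 1 / (N : ℝ))
    (ν : ℝ) (hν : ν = a - 4 * |b|) (hν0 : 0 < ν) :
    (∀ v : ℤ → ℝ, (∀ j : ℤ, v (j + 2 * N) = v j) →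
      h * ∑ j ∈ Finset.Icc (-N + 1) N, v j * Lqnl a b h K v j ≥
        ν * (h * ∑ j ∈ Finset.Icc (-N + 1) N, ((v j - v (j - 1)) / h) ^ 2)) ∧
    (∀ v rhs : ℤ → ℝ, (∀ j : ℤ, v (j + 2 * N) = v j) →
      (∀ j : ℤ, rhs (j + 2 * N) = rhs j) →
      (∀ j ∈ Finset.Icc (-N + 1) N, Lqnl a b h K v j = rhs j) →
      (∑ j ∈ Finset.Icc (-N + 1) N, rhs j = 0) →
      (∑ j ∈ Finset.Icc (-N + 1) N, v j = 0) →
      Real.sqrt (h * ∑ j ∈ Finset.Icc (-N + 1) N, ((v j - v (j - 1)) / h) ^ 2) ≤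
        (1 / (2 * ν)) * Real.sqrt (h * ∑ j ∈ Finset.Icc (-N + 1) N, (rhs j) ^ 2)) :=
  qnl_stability_general N K hK hKN a b h hb hh ν hν hν0
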